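/- arXiv:0806.3153 — 2 statements merged into one kernel-verified Lean document; each statement's English description precedes it below -/
import Mathlib

section
/- Let F be a field, R the ring of ternions over F, and n ≥ 1. Every 2-dimensional F-linear subspace of F^{n+1} is the image, under the coordinate bijection (rad R)^{n+1} → F^{n+1}, of the intersection M ∩ (rad R)^{n+1} for some non-unimodular free cyclic submodule M of R^{n+1}. -/
set_option synthInstance.maxHeartbeats 1000000
set_option maxHeartbeats 1000000

/-- The ring of ternions over a field `F`: the subring of `2×2` matrices over `F`
consisting of all upper triangular matrices. -/
def ternions (F : Type) [Field F] : Subring (Matrix (Fin 2) (Fin 2) F) where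
  carrier := {A | A 1 0 = 0}
  zero_mem' := by simp
  one_mem' := by simp [Matrix.one_apply]
  add_mem' := by
    intro a b ha hb
    simp only [Set.mem_setOf_eq, Matrix.add_apply] at *
    simp [ha, hb]
  neg_mem' := by
    intro a ha
    simp only [Set.mem_setOf_eq, Matrix.neg_apply] at *
    simp [ha]
  mul_mem' := by
    intro a b ha hb
    simp only [Set.mem_setOf_eq, Matrix.mul_apply, Fin.sum_univ_two] at *
    simp [ha, hb]

/-!
Choose a basis `b, c` of `W` and put `Xᵢ = (0 bᵢ; 0 cᵢ)`. Then `r • X` has entries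
`(0, r₀₀ bᵢ + r₀₁ cᵢ; 0, r₁₁ cᵢ)`, so the linear independence of `b, c` makes `r ↦ r • X`
injective, and the top-right entries `r₀₀ b + r₀₁ c` of the multiples of `X` sweep out
`span {b, c} = W`, already for `r = (x y; 0 0)`, where `r • X` lies in `(rad R)ⁿ⁺¹`.
Finally every `Xᵢ` lies in the kernel of the ring homomorphism `r ↦ r₀₀ : R → F`, hence so
does `φ X = ∑ Xᵢ φ(eᵢ)`, which therefore is never `1`.
-/

theorem Submodule.exists_linearIndependent_pair_span_eq_of_finrank_eq_two
    {K V : Type*} [DivisionRing K] [AddCommGroup V] [Module K V] {W : Submodule K V}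
    (hW : Module.finrank K W = 2) :
    ∃ b c : V, LinearIndependent K ![b, c] ∧ span K {b, c} = W := by
  have : Module.Finite K W := Module.finite_of_finrank_eq_succ hW
  let B := Module.finBasisOfFinrankEq K W hW
  have hB : W.subtype ∘ B = ![(B 0 : V), B 1] := by
    ext i; fin_cases i <;> rfl
  refine ⟨B 0, B 1, hB ▸ B.linearIndependent.map' W.subtype W.ker_subtype, ?_⟩
  rw [← Matrix.range_cons_cons_empty, ← hB, Set.range_comp, span_image, B.span_eq,
    map_subtype_top]

theorem not_exists_linearMap_eq_one_of_map_eq_zero {R S ι : Type*} [Ring R] [Semiring S]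
    [Nontrivial S] [Fintype ι] (f : R →+* S) {X : ι → R} (hX : ∀ i, f (X i) = 0) :
    ¬ ∃ φ : (ι → R) →ₗ[R] R, φ X = 1 := by
  classical
  rintro ⟨φ, hφ⟩
  have h := congrArg f hφ
  rw [φ.pi_apply_eq_sum_univ X, map_sum] at h
  simp [hX] at h

namespace ternions

variable {F : Type} [Field F]

def mk (a b d : F) : ternions F := ⟨!![a, b; 0, d], rfl⟩

@[simp] lemma val_mk (a b d : F) : (mk a b d).val = !![a, b; 0, d] := rfl

lemma val_one_zero (r : ternions F) : r.val 1 0 = 0 := r.2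

lemma mk_eta (r : ternions F) : mk (r.val 0 0) (r.val 0 1) (r.val 1 1) = r := by
  ext i j
  fin_cases i <;> fin_cases j <;> simp [val_one_zero]

lemma mk_inj {a b d a' b' d' : F} : mk a b d = mk a' b' d' ↔ a = a' ∧ b = b' ∧ d = d' := by
  refine ⟨fun h => ?_, by rintro ⟨rfl, rfl, rfl⟩; rfl⟩
  have h' := congrArg Subtype.val h
  simp only [val_mk] at h'
  exact ⟨congrFun (congrFun h' 0) 0, congrFun (congrFun h' 0) 1, congrFun (congrFun h' 1) 1⟩

lemma ext_entries {r s : ternions F} (h₀₀ : r.val 0 0 = s.val 0 0) (h₀₁ : r.val 0 1 = s.val 0 1)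
    (h₁₁ : r.val 1 1 = s.val 1 1) : r = s := by
  rw [← mk_eta r, ← mk_eta s, h₀₀, h₀₁, h₁₁]

lemma mul_mk (r : ternions F) (a b d : F) :
    r * mk a b d = mk (r.val 0 0 * a) (r.val 0 0 * b + r.val 0 1 * d) (r.val 1 1 * d) := by
  ext i j
  fin_cases i <;> fin_cases j <;>
    simp [Matrix.mul_apply, Fin.sum_univ_two, val_one_zero]

/-- Multiplicative because ternions are upper triangular. -/
def entry₀₀Hom : ternions F →+* F where
  toFun r := r.val 0 0
  map_one' := rfl
  map_mul' r s := by
    show (r.val * s.val) 0 0 = _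
    simp [Matrix.mul_apply, Fin.sum_univ_two, val_one_zero]
  map_zero' := rfl
  map_add' _ _ := rfl

variable {ι : Type*}

def colVec (b c : ι → F) : ι → ternions F := fun i => mk 0 (b i) (c i)

lemma colVec_inj {b c b' c' : ι → F} : colVec b c = colVec b' c' ↔ b = b' ∧ c = c' := by
  simp only [colVec, funext_iff, mk_inj, true_and, forall_and]

lemma smul_colVec (r : ternions F) (b c : ι → F) :
    r • colVec b c = colVec (r.val 0 0 • b + r.val 0 1 • c) (r.val 1 1 • c) := by
  funext i
  simp [colVec, mul_mk]

lemma smul_colVec_injective {b c : ι → F} (h : LinearIndependent F ![b, c]) :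
    Function.Injective (fun r : ternions F => r • colVec b c) := by
  intro r s hrs
  simp only [smul_colVec, colVec_inj] at hrs
  obtain ⟨hbc, hc⟩ := hrs
  obtain ⟨h₀₀, h₀₁⟩ := LinearIndependent.pair_iff.mp h (r.val 0 0 - s.val 0 0)
    (r.val 0 1 - s.val 0 1) (by rw [sub_smul, sub_smul, sub_add_sub_comm, hbc, sub_self])
  exact ext_entries (sub_eq_zero.mp h₀₀) (sub_eq_zero.mp h₀₁)
    (smul_left_injective F (h.ne_zero 1) hc)

lemma topRight_image_span_inter_rad (b c : ι → F) :
    (fun v : ι → ternions F => fun i => (v i).val 0 1) ''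
        {v | v ∈ Submodule.span (ternions F) {colVec b c} ∧
          ∀ i, (v i).val 0 0 = 0 ∧ (v i).val 1 1 = 0} =
      (Submodule.span F {b, c} : Set (ι → F)) := by
  ext w
  rw [SetLike.mem_coe, Submodule.mem_span_pair]
  constructor
  · rintro ⟨v, ⟨hv, -⟩, rfl⟩
    obtain ⟨r, rfl⟩ := Submodule.mem_span_singleton.mp hv
    refine ⟨r.val 0 0, r.val 0 1, ?_⟩
    rw [smul_colVec]
    funext i
    simp [colVec]
  · rintro ⟨x, y, rfl⟩
    refine ⟨mk x y 0 • colVec b c, ⟨Submodule.mem_span_singleton.mpr ⟨_, rfl⟩, ?_⟩, ?_⟩ <;>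
      rw [smul_colVec] <;> simp [colVec, funext_iff]

end ternions

open ternions in
theorem ternion_line_is_trace_of_nonUnimodular_free_general (F : Type) [Field F] (n : ℕ)
    (W : Submodule F (Fin (n + 1) → F)) (hW : Module.finrank F W = 2) :
    ∃ X : Fin (n + 1) → ternions F,
      Function.Injective (fun r : ternions F => r • X) ∧
      (¬ ∃ φ : (Fin (n + 1) → ternions F) →ₗ[ternions F] ternions F, φ X = 1) ∧
      (W : Set (Fin (n + 1) → F)) =
        (fun v : Fin (n + 1) → ternions F => fun i => (v i).val 0 1) ''
          {v : Fin (n + 1) → ternions F | v ∈ Submodule.span (ternions F) {X} ∧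
            ∀ i, (v i).val 0 0 = 0 ∧ (v i).val 1 1 = 0} := by
  obtain ⟨b, c, hbc, rfl⟩ := Submodule.exists_linearIndependent_pair_span_eq_of_finrank_eq_two hW
  refine ⟨colVec b c, smul_colVec_injective hbc, ?_, (topRight_image_span_inter_rad b c).symm⟩
  exact not_exists_linearMap_eq_one_of_map_eq_zero entry₀₀Hom fun i => rfl

/-- Every `2`-dimensional `F`-linear subspace of `F^{n+1}` is the image, under the
coordinate bijection `(rad R)^{n+1} → F^{n+1}`, of `M ∩ (rad R)^{n+1}` for some
non-unimodular free cyclic submodule `M = R·X` of `R^{n+1}`. -/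
theorem ternion_line_is_trace_of_nonUnimodular_free (F : Type) [Field F] (n : ℕ)
    (hn : 1 ≤ n) (W : Submodule F (Fin (n + 1) → F)) (hW : Module.finrank F W = 2) :
    ∃ X : Fin (n + 1) → ternions F,
      Function.Injective (fun r : ternions F => r • X) ∧
      (¬ ∃ φ : (Fin (n + 1) → ternions F) →ₗ[ternions F] ternions F, φ X = 1) ∧
      (W : Set (Fin (n + 1) → F)) =
        (fun v : Fin (n + 1) → ternions F => fun i => (v i).val 0 1) ''
          {v : Fin (n + 1) → ternions F | v ∈ Submodule.span (ternions F) {X} ∧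
            ∀ i, (v i).val 0 0 = 0 ∧ (v i).val 1 1 = 0} :=
  ternion_line_is_trace_of_nonUnimodular_free_general F n W hW
end

section
/- Let F = GF(q) be a finite field with q elements, R the ring of ternions over F, and n ≥ 1. If X ∈ R^{n+1} is a vector with I_X = I₁(b:1) = { (0 zb; 0 z) : z ∈ F } for some b ∈ F, then the number of non-unimodular free cyclic submodules of R^{n+1} containing X equals (q^n − 1)/(q − 1), i.e., this number N₃ satisfies (q − 1)·N₃ = q^n − 1; moreover, if I_X = I₁ (the ideal of ternions with zero first column), then X lies in exactly one non-unimodular free cyclic submodule, namely R·X itself. -/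
/-!
Write `R` for the ternions over `F` and `I_X` for the right ideal generated by the coordinates of
`X`. Since `Y` is unimodular iff `1 ∈ I_Y`, a free `Y` is non-unimodular exactly when every
coordinate of `Y` lies in `I₁`, i.e. `Yᵢ = (0 yᵢ; 0 zᵢ)`. Then `(x u; 0 w)` acts on the pair
`(y, z)` as `(x y + u z, w z)`, and `Y` is free iff `y, z` are linearly independent.

If `I_X = I₁(b:1)`, then `X` is the pair `(b z₀, z₀)` with `z₀ ≠ 0`, the submodules in question
are the `R·(y, z₀)` with `y ∉ F z₀`, and two of them agree iff the classes of the `y`'s in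
`F^{n+1} / F z₀` are proportional. They are therefore counted by the points of the projective
space of `F^{n+1} / F z₀`, of which there are `(q^n - 1)/(q - 1)`.

If `I_X = I₁`, then `X` is itself free (the left annihilator of `I₁` is zero) and
non-unimodular. In a finite ring a free `X ∈ R·Y` spans `R·Y`: from `X = r Y`, right
multiplication by `r` is injective, hence onto, so `s r = 1` for some `s` and `Y = s X`.
-/

set_option synthInstance.maxHeartbeats 1000000
set_option maxHeartbeats 1000000

open Function Submodule

section CyclicSubmodules

variable {R : Type*} [Ring R] {ι : Type*}

def IsNonUnimodularFreeCyclic (M : Submodule R (ι → R)) : Prop :=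
  ∃ Y : ι → R, M = span R {Y} ∧ Injective (fun r : R => r • Y) ∧
    ¬ ∃ φ : (ι → R) →ₗ[R] R, φ Y = 1

theorem exists_linearMap_apply_eq_one_iff [Fintype ι] (Y : ι → R) :
    (∃ φ : (ι → R) →ₗ[R] R, φ Y = 1) ↔ (1 : R) ∈ span Rᵐᵒᵖ (Set.range Y) := by
  classical
  rw [mem_span_range_iff_exists_fun]
  constructor
  · rintro ⟨φ, hφ⟩
    refine ⟨fun i => MulOpposite.op (φ fun j => if i = j then 1 else 0), ?_⟩
    rw [LinearMap.pi_apply_eq_sum_univ φ Y] at hφ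
    simpa using hφ
  · rintro ⟨c, hc⟩
    refine ⟨∑ i, (LinearMap.proj i).smulRight (c i).unop, ?_⟩
    simpa using hc

theorem mul_mem_span_range (Y : ι → R) (i : ι) (r : R) : Y i * r ∈ span Rᵐᵒᵖ (Set.range Y) :=
  smul_mem _ (MulOpposite.op r) (subset_span ⟨i, rfl⟩)

theorem injective_smul_of_forall_mul_eq_zero {X : ι → R}
    (h : ∀ r : R, (∀ A ∈ span Rᵐᵒᵖ (Set.range X), r * A = 0) → r = 0) :
    Injective (fun r : R => r • X) := by
  intro r r' hrr
  rw [← sub_eq_zero]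
  refine h _ fun A hA => ?_
  induction hA using span_induction with
  | mem A hA =>
    obtain ⟨i, rfl⟩ := hA
    simpa [sub_mul, sub_eq_zero] using congrFun hrr i
  | zero => exact mul_zero _
  | add A B _ _ hA hB => rw [mul_add, hA, hB, add_zero]
  | smul c A _ hA => rw [MulOpposite.smul_eq_mul_unop, ← mul_assoc, hA, zero_mul]

theorem span_singleton_eq_of_injective_smul_of_mem [Finite R] {M : Type*} [AddCommGroup M]
    [Module R M] {X Y : M} (hX : Injective (fun r : R => r • X)) (hXY : X ∈ R ∙ Y) :
    R ∙ X = R ∙ Y := by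
  obtain ⟨r, rfl⟩ := mem_span_singleton.1 hXY
  have : Injective (· * r) := fun s s' h => hX (by simp only at h; simp only [smul_smul, h])
  obtain ⟨s, hs : s * r = 1⟩ := Finite.injective_iff_surjective.1 this 1
  have hY := smul_mem (R ∙ r • Y) s (mem_span_singleton_self (r • Y))
  rw [smul_smul, hs, one_smul] at hY
  exact le_antisymm ((span_singleton_le_iff_mem _ _).2 hXY)
    ((span_singleton_le_iff_mem _ _).2 hY)

theorem setOf_isNonUnimodularFreeCyclic_mem_eq_singleton [Finite R] {X : ι → R}
    (hfree : Injective (fun r : R => r • X)) (hX : ¬ ∃ φ : (ι → R) →ₗ[R] R, φ X = 1) :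
    {M : Submodule R (ι → R) | IsNonUnimodularFreeCyclic M ∧ X ∈ M} = {R ∙ X} := by
  ext M
  constructor
  · rintro ⟨⟨Y, rfl, -, -⟩, hXY⟩
    exact (span_singleton_eq_of_injective_smul_of_mem hfree hXY).symm
  · rintro rfl
    exact ⟨⟨X, rfl, hfree, hX⟩, mem_span_singleton_self X⟩

end CyclicSubmodules

theorem Nat.card_eq_of_surjective_of_ker_eq {α β γ : Type*} {f : α → β} {g : α → γ}
    (hf : Surjective f) (hg : Surjective g) (h : Setoid.ker f = Setoid.ker g) :
    Nat.card β = Nat.card γ :=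
  Nat.card_congr <| (Setoid.quotientKerEquivOfSurjective f hf).symm.trans <|
    (Quotient.congrRight (by rw [h]; exact fun _ _ => Iff.rfl)).trans
      (Setoid.quotientKerEquivOfSurjective g hg)

theorem card_quotient_span_singleton_mul_card {K V : Type*} [Field K] [AddCommGroup V]
    [Module K V] {z : V} (hz : z ≠ 0) : Nat.card (V ⧸ K ∙ z) * Nat.card K = Nat.card V := by
  rw [card_eq_card_quotient_mul_card (K ∙ z),
    Nat.card_congr (LinearEquiv.toSpanNonzeroSingleton K V z hz).toEquiv, mul_comm]

theorem linearIndependent_pair_iff_mk_ne_zero {K V : Type*} [Field K] [AddCommGroup V]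
    [Module K V] {y z : V} (hz : z ≠ 0) :
    LinearIndependent K ![y, z] ↔ (Submodule.Quotient.mk y : V ⧸ K ∙ z) ≠ 0 := by
  rw [linearIndependent_fin2]
  simp [Submodule.Quotient.mk_eq_zero, mem_span_singleton, hz]

namespace Ternions

variable {F : Type} [Field F]

def mk (a b c : F) : ternions F := ⟨!![a, b; 0, c], rfl⟩

@[simp] theorem coe_mk (a b c : F) : (mk a b c : Matrix (Fin 2) (Fin 2) F) = !![a, b; 0, c] :=
  rfl

@[ext] theorem ext {A B : ternions F} (h₀₀ : A.val 0 0 = B.val 0 0)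
    (h₀₁ : A.val 0 1 = B.val 0 1) (h₁₁ : A.val 1 1 = B.val 1 1) : A = B := by
  have h₁₀ : A.val 1 0 = B.val 1 0 := A.2.trans B.2.symm
  ext i j
  fin_cases i <;> fin_cases j <;> assumption

@[simp] theorem mk_val (A : ternions F) : mk (A.val 0 0) (A.val 0 1) (A.val 1 1) = A := by
  ext <;> simp

theorem mk_inj {a b c a' b' c' : F} : mk a b c = mk a' b' c' ↔ a = a' ∧ b = b' ∧ c = c' := by
  refine ⟨fun h => ?_, by rintro ⟨rfl, rfl, rfl⟩; rfl⟩
  have h := congrArg Subtype.val h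
  simp only [coe_mk] at h
  exact ⟨congrFun₂ h 0 0, congrFun₂ h 0 1, congrFun₂ h 1 1⟩

@[simp] theorem mk_mul (a b c a' b' c' : F) :
    mk a b c * mk a' b' c' = mk (a * a') (a * b' + b * c') (c * c') := by
  ext <;> simp [Matrix.mul_apply]

@[simp] theorem mk_add (a b c a' b' c' : F) :
    mk a b c + mk a' b' c' = mk (a + a') (b + b') (c + c') := by
  ext <;> simp

theorem mk_zero : mk 0 0 0 = (0 : ternions F) := by ext <;> simp

@[simp] theorem mk_eq_zero {a b c : F} : mk a b c = 0 ↔ a = 0 ∧ b = 0 ∧ c = 0 := by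
  rw [← mk_zero, mk_inj]

theorem mk_one : mk 1 0 1 = (1 : ternions F) := by ext <;> simp

def I1 : Submodule (ternions F)ᵐᵒᵖ (ternions F) where
  carrier := {A | A.val 0 0 = 0}
  add_mem' {A B} hA hB := by simp_all
  zero_mem' := by simp
  smul_mem' c A hA := by
    rw [MulOpposite.smul_eq_mul_unop, ← mk_val A, ← mk_val c.unop, mk_mul]
    simp_all

@[simp] theorem mem_I1 {A : ternions F} : A ∈ I1 ↔ A.val 0 0 = 0 := Iff.rfl

theorem one_notMem_I1 : (1 : ternions F) ∉ I1 := by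
  simp

theorem eq_zero_of_forall_mul_I1 {r : ternions F} (h : ∀ A ∈ I1, r * A = 0) : r = 0 := by
  have h₁ := h (mk 0 1 0) (by simp)
  have h₂ := h (mk 0 0 1) (by simp)
  rw [← mk_val r, mk_mul, mk_eq_zero] at h₁ h₂
  ext <;> simp_all

variable {ι : Type*}

def i1Vec (y z : ι → F) : ι → ternions F := fun i => mk 0 (y i) (z i)

theorem mk_smul_i1Vec (x u w : F) (y z : ι → F) :
    mk x u w • i1Vec y z = i1Vec (x • y + u • z) (w • z) := by
  ext i <;> simp [i1Vec]

theorem i1Vec_inj {y z y' z' : ι → F} : i1Vec y z = i1Vec y' z' ↔ y = y' ∧ z = z' := by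
  simp only [funext_iff, i1Vec, mk_inj, true_and, forall_and]

theorem eq_i1Vec {Y : ι → ternions F} (hY : ∀ i, (Y i).val 0 0 = 0) :
    Y = i1Vec (fun i => (Y i).val 0 1) (fun i => (Y i).val 1 1) := by
  ext i <;> simp [i1Vec, hY]

theorem mem_span_i1Vec {V : ι → ternions F} {y z : ι → F} :
    V ∈ ternions F ∙ i1Vec y z ↔ ∃ x u w : F, V = i1Vec (x • y + u • z) (w • z) := by
  rw [Submodule.mem_span_singleton]
  constructor
  · rintro ⟨r, rfl⟩
    exact ⟨_, _, _, by rw [← mk_smul_i1Vec, mk_val]⟩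
  · rintro ⟨x, u, w, rfl⟩
    exact ⟨_, mk_smul_i1Vec x u w y z⟩

theorem i1Vec_zero : i1Vec (0 : ι → F) 0 = 0 := by
  ext i <;> simp [i1Vec]

theorem injective_smul_i1Vec_iff {y z : ι → F} :
    Injective (fun r : ternions F => r • i1Vec y z) ↔ LinearIndependent F ![y, z] := by
  rw [LinearIndependent.pair_iff]
  constructor
  · intro h s t hst
    have h₀ : mk s t 0 • i1Vec y z = (0 : ternions F) • i1Vec y z := by
      rw [mk_smul_i1Vec, hst, zero_smul, zero_smul, i1Vec_zero]
    simpa using h h₀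
  · intro h r r' hrr
    simp only at hrr
    rw [← mk_val r, ← mk_val r', mk_smul_i1Vec, mk_smul_i1Vec, i1Vec_inj] at hrr
    obtain ⟨h₁, h₂⟩ := hrr
    have e₁ := h (r.val 0 0 - r'.val 0 0) (r.val 0 1 - r'.val 0 1)
      (by rw [sub_smul, sub_smul, sub_add_sub_comm, h₁, sub_self])
    have e₂ := h 0 (r.val 1 1 - r'.val 1 1)
      (by rw [zero_smul, zero_add, sub_smul, h₂, sub_self])
    ext
    exacts [sub_eq_zero.1 e₁.1, sub_eq_zero.1 e₁.2, sub_eq_zero.1 e₂.2]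

theorem one_mem_span_range {Y : ι → ternions F} {i j : ι} (hi : (Y i).val 0 0 ≠ 0)
    (hj : (Y j).val 1 1 ≠ 0) : (1 : ternions F) ∈ span (ternions F)ᵐᵒᵖ (Set.range Y) := by
  obtain ⟨a, b, c, hYi⟩ : ∃ a b c, mk a b c = Y i := ⟨_, _, _, mk_val _⟩
  obtain ⟨a', b', c', hYj⟩ : ∃ a b c, mk a b c = Y j := ⟨_, _, _, mk_val _⟩
  rw [← hYi] at hi
  rw [← hYj] at hj
  simp at hi hj
  have h : mk a b c * mk a⁻¹ (-(b' * c'⁻¹ * a⁻¹)) 0 + mk a' b' c' * mk 0 0 c'⁻¹ = 1 := by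
    rw [← mk_one, mk_mul, mk_mul, mk_add, mk_inj]
    refine ⟨?_, ?_, ?_⟩ <;> field_simp <;> ring
  rw [← h, hYi, hYj]
  exact add_mem (mul_mem_span_range Y i _) (mul_mem_span_range Y j _)

theorem isNonUnimodularFreeCyclic_iff [Fintype ι]
    {M : Submodule (ternions F) (ι → ternions F)} :
    IsNonUnimodularFreeCyclic M ↔
      ∃ y z : ι → F, LinearIndependent F ![y, z] ∧ M = ternions F ∙ i1Vec y z := by
  constructor
  · rintro ⟨Y, rfl, hfree, hnu⟩
    obtain ⟨j, hj⟩ : ∃ j, (Y j).val 1 1 ≠ 0 := by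
      by_contra! h
      have h₀ : mk (0 : F) 0 1 • Y = (0 : ternions F) • Y := by
        funext k
        rw [Pi.smul_apply, smul_eq_mul, ← mk_val (Y k), h k, mk_mul, zero_smul]
        simp
      simpa using hfree h₀
    have h₀₀ : ∀ i, (Y i).val 0 0 = 0 := fun i => by
      by_contra hi
      exact hnu ((exists_linearMap_apply_eq_one_iff Y).2 (one_mem_span_range hi hj))
    rw [eq_i1Vec h₀₀] at hfree ⊢
    exact ⟨_, _, injective_smul_i1Vec_iff.1 hfree, rfl⟩
  · rintro ⟨y, z, hyz, rfl⟩
    refine ⟨i1Vec y z, rfl, injective_smul_i1Vec_iff.2 hyz, ?_⟩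
    rw [exists_linearMap_apply_eq_one_iff]
    refine fun h => one_notMem_I1 (span_le.2 ?_ h)
    exact Set.range_subset_iff.2 fun i => by simp [i1Vec]

theorem isNonUnimodularFreeCyclic_and_mem_iff [Fintype ι] [Finite F] {z₀ : ι → F}
    (hz₀ : z₀ ≠ 0) (b : F) {M : Submodule (ternions F) (ι → ternions F)} :
    IsNonUnimodularFreeCyclic M ∧ i1Vec (b • z₀) z₀ ∈ M ↔
      ∃ y, LinearIndependent F ![y, z₀] ∧ M = ternions F ∙ i1Vec y z₀ := by
  rw [isNonUnimodularFreeCyclic_iff]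
  constructor
  · rintro ⟨⟨y, z, hyz, rfl⟩, hX⟩
    obtain ⟨x, u, w, hX⟩ := mem_span_i1Vec.1 hX
    obtain ⟨-, rfl⟩ := i1Vec_inj.1 hX
    have hw : w ≠ 0 := by rintro rfl; simp at hz₀
    have hywz : LinearIndependent F ![y, w • z] := by
      rw [LinearIndependent.pair_iff] at hyz ⊢
      intro s t hst
      obtain ⟨hs, htw⟩ := hyz s (t * w) (by rwa [mul_smul])
      exact ⟨hs, (mul_eq_zero.1 htw).resolve_right hw⟩
    refine ⟨y, hywz, (span_singleton_eq_of_injective_smul_of_mem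
      (injective_smul_i1Vec_iff.2 hywz) (mem_span_i1Vec.2 ⟨1, 0, w, by simp⟩)).symm⟩
  · rintro ⟨y, hy, rfl⟩
    exact ⟨⟨y, z₀, hy, rfl⟩, mem_span_i1Vec.2 ⟨0, b, 1, by simp⟩⟩

theorem span_i1Vec_eq_span_i1Vec_iff [Finite F] {y y' z : ι → F}
    (hy : LinearIndependent F ![y, z]) :
    ternions F ∙ i1Vec y z = ternions F ∙ i1Vec y' z ↔ ∃ a : Fˣ, a • y' - y ∈ F ∙ z := by
  constructor
  · intro h
    obtain ⟨x, u, w, hxuw⟩ := mem_span_i1Vec.1 (h ▸ mem_span_singleton_self (i1Vec y z))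
    obtain ⟨rfl, -⟩ := i1Vec_inj.1 hxuw
    have hx : x ≠ 0 := by
      rintro rfl
      exact (linearIndependent_fin2.1 hy).2 u (by simp)
    exact ⟨Units.mk0 x hx, mem_span_singleton.2 ⟨-u, by simp⟩⟩
  · rintro ⟨a, ha⟩
    obtain ⟨u, hu⟩ := mem_span_singleton.1 ha
    refine span_singleton_eq_of_injective_smul_of_mem (injective_smul_i1Vec_iff.2 hy)
      (mem_span_i1Vec.2 ⟨a, -u, 1, ?_⟩)
    rw [neg_smul, hu, one_smul, Units.smul_def]
    abel_nf

open scoped LinearAlgebra.Projectivization in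
theorem card_isNonUnimodularFreeCyclic_mem_eq_card_projectivization [Fintype ι] [Finite F]
    {z₀ : ι → F} (hz₀ : z₀ ≠ 0) (b : F) :
    Nat.card {M : Submodule (ternions F) (ι → ternions F) //
        IsNonUnimodularFreeCyclic M ∧ i1Vec (b • z₀) z₀ ∈ M} =
      Nat.card (ℙ F ((ι → F) ⧸ F ∙ z₀)) := by
  let f (y : {y // LinearIndependent F ![y, z₀]}) :
      {M // IsNonUnimodularFreeCyclic M ∧ i1Vec (b • z₀) z₀ ∈ M} :=
    ⟨_, (isNonUnimodularFreeCyclic_and_mem_iff hz₀ b).2 ⟨y, y.2, rfl⟩⟩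
  let g (y : {y // LinearIndependent F ![y, z₀]}) : ℙ F ((ι → F) ⧸ F ∙ z₀) :=
    .mk F (Submodule.Quotient.mk y.1) ((linearIndependent_pair_iff_mk_ne_zero hz₀).1 y.2)
  refine Nat.card_eq_of_surjective_of_ker_eq (f := f) (g := g) ?_ ?_ ?_
  · rintro ⟨M, hM⟩
    obtain ⟨y, hy, rfl⟩ := (isNonUnimodularFreeCyclic_and_mem_iff hz₀ b).1 hM
    exact ⟨⟨y, hy⟩, rfl⟩
  · intro p
    obtain ⟨y, hy⟩ := Submodule.Quotient.mk_surjective _ p.rep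
    refine ⟨⟨y, (linearIndependent_pair_iff_mk_ne_zero hz₀).2 (hy ▸ p.rep_nonzero)⟩, ?_⟩
    simp only [g, hy, Projectivization.mk_rep]
  · ext ⟨y, hy⟩ ⟨y', hy'⟩
    rw [Setoid.ker_def, Setoid.ker_def, Subtype.mk.injEq, Projectivization.mk_eq_mk_iff,
      span_i1Vec_eq_span_i1Vec_iff hy]
    simp only [← Submodule.Quotient.mk_smul, Submodule.Quotient.eq]

theorem exists_eq_i1Vec_of_span_eq {X : ι → ternions F} {b : F}
    (hX : (span (ternions F)ᵐᵒᵖ (Set.range X) : Set (ternions F)) =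
      {A | A.val 0 0 = 0 ∧ ∃ z : F, A.val 0 1 = z * b ∧ A.val 1 1 = z}) :
    ∃ z₀ : ι → F, z₀ ≠ 0 ∧ X = i1Vec (b • z₀) z₀ := by
  have hXi (i : ι) : X i ∈ (span (ternions F)ᵐᵒᵖ (Set.range X) : Set (ternions F)) :=
    subset_span ⟨i, rfl⟩
  have hXeq : X = i1Vec (b • fun i => (X i).val 1 1) fun i => (X i).val 1 1 := by
    ext i <;> obtain ⟨h₀, z, h₁, rfl⟩ := hX ▸ hXi i <;> simp [i1Vec, h₀, h₁, mul_comm]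
  refine ⟨_, fun hz => ?_, hXeq⟩
  have hbot : span (ternions F)ᵐᵒᵖ (Set.range X) = ⊥ := by
    rw [span_eq_bot, hXeq, hz]
    rintro _ ⟨i, rfl⟩
    simp [i1Vec]
  have h : mk 0 b 1 ∈ (span (ternions F)ᵐᵒᵖ (Set.range X) : Set (ternions F)) := by
    rw [hX]
    simp
  simp [hbot] at h

end Ternions

theorem ternion_count_through_I1b1_and_I1_vectors_general (F : Type) [Field F] [Fintype F]
    (q n : ℕ) (hq : Fintype.card F = q) :
    (∀ X : Fin (n + 1) → ternions F, ∀ b : F,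
      (Submodule.span (ternions F)ᵐᵒᵖ (Set.range X) : Set (ternions F)) =
          {A : ternions F | A.val 0 0 = 0 ∧ ∃ z : F, A.val 0 1 = z * b ∧ A.val 1 1 = z} →
      (q - 1) *
          Nat.card {M : Submodule (ternions F) (Fin (n + 1) → ternions F) //
            (∃ Y : Fin (n + 1) → ternions F, M = Submodule.span (ternions F) {Y} ∧
              Function.Injective (fun r : ternions F => r • Y) ∧
              ¬ ∃ φ : (Fin (n + 1) → ternions F) →ₗ[ternions F] ternions F, φ Y = 1) ∧
            X ∈ M} =
        q ^ n - 1) ∧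
    (∀ X : Fin (n + 1) → ternions F,
      (Submodule.span (ternions F)ᵐᵒᵖ (Set.range X) : Set (ternions F)) =
          {A : ternions F | A.val 0 0 = 0} →
      {M : Submodule (ternions F) (Fin (n + 1) → ternions F) |
          (∃ Y : Fin (n + 1) → ternions F, M = Submodule.span (ternions F) {Y} ∧
            Function.Injective (fun r : ternions F => r • Y) ∧
            ¬ ∃ φ : (Fin (n + 1) → ternions F) →ₗ[ternions F] ternions F, φ Y = 1) ∧
          X ∈ M} =
        {Submodule.span (ternions F) {X}}) := by
  subst hq
  refine ⟨fun X b hX => ?_, fun X hX => ?_⟩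
  · obtain ⟨z₀, hz₀, rfl⟩ := Ternions.exists_eq_i1Vec_of_span_eq hX
    have hW : Nat.card ((Fin (n + 1) → F) ⧸ F ∙ z₀) = Nat.card F ^ n := by
      refine Nat.eq_of_mul_eq_mul_right (Nat.card_pos (α := F)) ?_
      rw [card_quotient_span_singleton_mul_card hz₀, Nat.card_fun, Nat.card_fin, pow_succ]
    rw [← Nat.card_eq_fintype_card, ← hW,
      Projectivization.card F ((Fin (n + 1) → F) ⧸ F ∙ z₀),
      ← Ternions.card_isNonUnimodularFreeCyclic_mem_eq_card_projectivization hz₀ b, mul_comm]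
    rfl
  · replace hX : span (ternions F)ᵐᵒᵖ (Set.range X) = Ternions.I1 := SetLike.coe_injective hX
    refine setOf_isNonUnimodularFreeCyclic_mem_eq_singleton ?_ ?_
    · exact injective_smul_of_forall_mul_eq_zero fun r hr =>
        Ternions.eq_zero_of_forall_mul_I1 (hX ▸ hr)
    · rw [exists_linearMap_apply_eq_one_iff, hX]
      exact Ternions.one_notMem_I1

/-- Over `F = GF(q)`: if the coordinates of `X ∈ R^{n+1}` generate as right ideal exactly
`I₁(b:1) = { (0 zb; 0 z) : z ∈ F }` for some `b ∈ F`, then the number `N₃` of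
non-unimodular free cyclic submodules containing `X` satisfies `(q - 1)·N₃ = q^n - 1`;
moreover, if they generate exactly `I₁` (zero first column), then `X` lies in exactly
one non-unimodular free cyclic submodule, namely `R·X` itself. -/
theorem ternion_count_through_I1b1_and_I1_vectors (F : Type) [Field F] [Fintype F]
    (q n : ℕ) (hq : Fintype.card F = q) (hn : 1 ≤ n) :
    (∀ X : Fin (n + 1) → ternions F, ∀ b : F,
      (Submodule.span (ternions F)ᵐᵒᵖ (Set.range X) : Set (ternions F)) =
          {A : ternions F | A.val 0 0 = 0 ∧ ∃ z : F, A.val 0 1 = z * b ∧ A.val 1 1 = z} →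
      (q - 1) *
          Nat.card {M : Submodule (ternions F) (Fin (n + 1) → ternions F) //
            (∃ Y : Fin (n + 1) → ternions F, M = Submodule.span (ternions F) {Y} ∧
              Function.Injective (fun r : ternions F => r • Y) ∧
              ¬ ∃ φ : (Fin (n + 1) → ternions F) →ₗ[ternions F] ternions F, φ Y = 1) ∧
            X ∈ M} =
        q ^ n - 1) ∧
    (∀ X : Fin (n + 1) → ternions F,
      (Submodule.span (ternions F)ᵐᵒᵖ (Set.range X) : Set (ternions F)) =
          {A : ternions F | A.val 0 0 = 0} →
      {M : Submodule (ternions F) (Fin (n + 1) → ternions F) |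
          (∃ Y : Fin (n + 1) → ternions F, M = Submodule.span (ternions F) {Y} ∧
            Function.Injective (fun r : ternions F => r • Y) ∧
            ¬ ∃ φ : (Fin (n + 1) → ternions F) →ₗ[ternions F] ternions F, φ Y = 1) ∧
          X ∈ M} =
        {Submodule.span (ternions F) {X}}) :=
  ternion_count_through_I1b1_and_I1_vectors_general F q n hq
end
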